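/- Let K be a finite field of characteristic p and (M,+,∘) a K-brace with dim_K M = r < p − 1. Then every non-zero element of the group (M,∘) has order p. In particular, if (M,∘) is abelian then (M,∘) ≅ (M,+) (both elementary abelian p-groups of the same cardinality). -/

import Mathlib

/-- A (left) brace structure on an abelian group `N`. -/
structure BraceStruct (N : Type*) [AddCommGroup N] where
  circ : N → N → N
  cinv : N → N
  circ_assoc : ∀ x y z, circ (circ x y) z = circ x (circ y z)
  zero_circ : ∀ x, circ 0 x = x
  circ_zero : ∀ x, circ x 0 = x
  cinv_circ : ∀ x, circ (cinv x) x = 0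
  circ_cinv : ∀ x, circ x (cinv x) = 0
  brace : ∀ x y z, circ x (y + z) = circ x y - x + circ x z

/-- The gamma function of a brace: γ_x(y) = -x + x∘y. -/
def BraceStruct.gamma {N : Type*} [AddCommGroup N] (B : BraceStruct N)
    (x y : N) : N := -x + B.circ x y

/-- A brace whose additive group is an `R`-module is an `R`-brace when every
γ_x is an `R`-module automorphism (equivalently, is `R`-linear). -/
def BraceStruct.IsRBrace (R : Type*) {N : Type*} [Ring R] [AddCommGroup N]
    [Module R N] (B : BraceStruct N) : Prop :=
  ∀ (x : N) (r : R) (y : N), B.gamma x (r • y) = r • B.gamma x y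

/-- The m-fold ∘-power m_∘ a = a ∘ a ∘ ⋯ ∘ a (m factors). -/
def BraceStruct.circPow {N : Type*} [AddCommGroup N] (B : BraceStruct N) :
    ℕ → N → N
  | 0, _ => 0
  | n + 1, a => B.circ a (B.circPow n a)

namespace BraceStruct

variable {N : Type*} [AddCommGroup N] (B : BraceStruct N)

lemma gamma_add (x y z : N) : B.gamma x (y + z) = B.gamma x y + B.gamma x z := by
  simp only [gamma, B.brace]
  abel

lemma gamma_zero_right (x : N) : B.gamma x 0 = 0 := by
  simp [gamma, B.circ_zero]

lemma gamma_zero_left (z : N) : B.gamma 0 z = z := by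
  simp [gamma, B.zero_circ]

lemma gamma_neg (x y : N) : B.gamma x (-y) = - B.gamma x y := by
  have h := B.gamma_add x y (-y)
  rw [add_neg_cancel, gamma_zero_right] at h
  exact (neg_eq_of_add_eq_zero_right h.symm).symm

lemma circ_eq (x y : N) : B.circ x y = x + B.gamma x y := by
  simp [gamma]

lemma gamma_circ (x y z : N) : B.gamma (B.circ x y) z = B.gamma x (B.gamma y z) := by
  show _ = B.gamma x (-y + B.circ y z)
  rw [gamma_add, gamma_neg]
  simp only [gamma, B.circ_assoc]
  abel

lemma circPow_zero_left : ∀ n : ℕ, B.circPow n 0 = 0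
  | 0 => rfl
  | n + 1 => by
      show B.circ 0 (B.circPow n 0) = 0
      rw [B.zero_circ, circPow_zero_left n]

/-- Type synonym carrying the ∘-group structure of a brace. -/
def CircG {N : Type*} [AddCommGroup N] (_B : BraceStruct N) := N

instance : Mul (CircG B) := ⟨B.circ⟩
instance : One (CircG B) := ⟨(0 : N)⟩
instance : Inv (CircG B) := ⟨B.cinv⟩

instance : Group (CircG B) :=
  Group.ofLeftAxioms B.circ_assoc B.zero_circ B.cinv_circ

lemma circG_pow (a : CircG B) : ∀ n : ℕ, a ^ n = B.circPow n a
  | 0 => by rw [pow_zero]; rfl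
  | n + 1 => by
      rw [pow_succ', circG_pow a n]
      rfl

/-- The identity map into the ∘-group synonym. -/
def toCircG (a : N) : CircG B := a

lemma circPow_card [Fintype N] (a : N) : B.circPow (Fintype.card N) a = 0 := by
  letI : Fintype (CircG B) := ‹Fintype N›
  have h : B.toCircG a ^ Fintype.card (CircG B) = 1 := pow_card_eq_one
  rw [B.circG_pow] at h
  have hcc : Fintype.card (CircG B) = Fintype.card N := rfl
  rw [hcc] at h
  exact h

end BraceStruct

open Finset Polynomial

/-- let K be a finite field of characteristic p and M a K-brace
with dim_K M = r < p − 1. Then every non-zero element of (M,∘) has order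
exactly p; in particular, if (M,∘) is abelian then (M,∘) ≅ (M,+). -/
theorem small_dim_brace_orders
    {K M : Type*} [Field K] [Fintype K] (p : ℕ) [CharP K p] (hp : p.Prime)
    [AddCommGroup M] [Module K M] [Module.Finite K M]
    (B : BraceStruct M) (hB : B.IsRBrace K)
    (hr : Module.finrank K M < p - 1) :
    (∀ a : M, a ≠ 0 →
        B.circPow p a = 0 ∧ ∀ m : ℕ, 0 < m → m < p → B.circPow m a ≠ 0) ∧
    ((∀ x y : M, B.circ x y = B.circ y x) →
      ∃ e : M ≃ M, ∀ x y : M, e (B.circ x y) = e x + e y) := by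
  haveI : Fact p.Prime := ⟨hp⟩
  haveI : Finite M := Module.finite_of_finite K
  letI : Fintype M := Fintype.ofFinite M
  letI : Fintype (BraceStruct.CircG B) := ‹Fintype M›
  set r := Module.finrank K M with hrdef
  have hchar : ∀ x : M, p • x = 0 := fun x => by
    rw [← Nat.cast_smul_eq_nsmul K, CharP.cast_eq_zero, zero_smul]
  obtain ⟨fn, hpf, hf⟩ := FiniteField.card K p
  have hcardM : Fintype.card M = p ^ ((fn : ℕ) * r) := by
    rw [Module.card_eq_pow_finrank (K := K) (V := M), hf, ← pow_mul, ← hrdef]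
  -- key fact: the p-th ∘-power of any element vanishes
  have key : ∀ a : M, B.circPow p a = 0 := by
    intro a
    rcases eq_or_ne a 0 with rfl | ha
    · exact B.circPow_zero_left p
    haveI : Nontrivial M := ⟨a, 0, ha⟩
    set L : Module.End K M :=
      { toFun := B.gamma a
        map_add' := B.gamma_add a
        map_smul' := fun c y => hB a c y } with hLdef
    have hLapp : ∀ y, L y = B.gamma a y := fun _ => rfl
    have hgam : ∀ n, ∀ z, B.gamma (B.circPow n a) z = (L ^ n) z := by
      intro n
      induction n with
      | zero => intro z; simp [BraceStruct.circPow, B.gamma_zero_left]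
      | succ n ih =>
        intro z
        show B.gamma (B.circ a (B.circPow n a)) z = (L ^ (n + 1)) z
        rw [B.gamma_circ, ih, pow_succ', Module.End.mul_apply, hLapp]
    have hsum : ∀ n, B.circPow n a = ∑ j ∈ range n, (L ^ j) a := by
      intro n
      induction n with
      | zero => simp [BraceStruct.circPow]
      | succ n ih =>
        show B.circ a (B.circPow n a) = _
        rw [B.circ_eq, ← hLapp, ih, map_sum, Finset.sum_range_succ']
        have : ∀ j, L ((L ^ j) a) = (L ^ (j + 1)) a := by
          intro j; rw [pow_succ', Module.End.mul_apply]
        simp only [this, pow_zero, Module.End.one_apply]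
        abel
    haveI : CharP (Module.End K M) p := by
      refine charP_of_injective_algebraMap (R := K) (A := Module.End K M) ?_ p
      intro c d h
      have h2 : c • a = d • a := by
        have := congrArg (fun φ : Module.End K M => φ a) h
        simpa [Module.algebraMap_end_apply] using this
      exact smul_left_injective K ha h2
    set δ : Module.End K M := L - 1 with hδ
    have hLδ : L = 1 + δ := by rw [hδ]; abel
    have hLord : L ^ (p ^ ((fn : ℕ) * r)) = 1 := by
      ext z
      have h1 : B.circPow (p ^ ((fn : ℕ) * r)) a = 0 := by
        rw [← hcardM]
        exact B.circPow_card a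
      calc (L ^ (p ^ ((fn : ℕ) * r))) z
          = B.gamma (B.circPow (p ^ ((fn : ℕ) * r)) a) z := (hgam _ z).symm
        _ = B.gamma 0 z := by rw [h1]
        _ = z := B.gamma_zero_left z
    have hnil : δ ^ (p ^ ((fn : ℕ) * r)) = 0 := by
      have h3 := add_pow_char_pow_of_commute (R := Module.End K M)
        p ((fn : ℕ) * r) (Commute.one_left δ)
      rw [← hLδ, hLord, one_pow] at h3
      exact (left_eq_add.mp h3)
    have hnilp : IsNilpotent δ := ⟨_, hnil⟩
    have hδr : δ ^ r = 0 := by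
      have hcp := hnilp.charpoly_eq_X_pow_finrank
      have h4 := LinearMap.aeval_self_charpoly δ
      rw [hcp] at h4
      simpa using h4
    have hδp : δ ^ (p - 1) = 0 := by
      have hle : r ≤ p - 1 := hr.le
      calc δ ^ (p - 1) = δ ^ r * δ ^ (p - 1 - r) := by
            rw [← pow_add, Nat.add_sub_cancel' hle]
        _ = 0 := by rw [hδr, zero_mul]
    have hpoly : (∑ i ∈ range p, (X : K[X]) ^ i) = (X - 1) ^ (p - 1) := by
      have hX : (X - 1 : K[X]) ≠ 0 := by
        have h5 := Polynomial.X_sub_C_ne_zero (1 : K)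
        rwa [map_one] at h5
      apply mul_right_cancel₀ hX
      rw [geom_sum_mul, ← pow_succ, Nat.sub_add_cancel hp.one_lt.le, sub_pow_char,
        one_pow]
    have hend : (∑ j ∈ range p, L ^ j) = δ ^ (p - 1) := by
      have h6 := congrArg (Polynomial.aeval L) hpoly
      simpa [map_sum, map_pow, map_sub, map_one, hδ] using h6
    calc B.circPow p a = ∑ j ∈ range p, (L ^ j) a := hsum p
      _ = (∑ j ∈ range p, L ^ j) a := (LinearMap.sum_apply _ _ _).symm
      _ = (δ ^ (p - 1)) a := by rw [hend]
      _ = 0 := by rw [hδp]; rfl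
  constructor
  · intro a ha
    refine ⟨key a, ?_⟩
    intro m hm0 hmp hcontra
    have h1 : B.toCircG a ^ p = 1 := by rw [B.circG_pow]; exact key a
    have h2 : B.toCircG a ≠ 1 := ha
    have hord : orderOf (B.toCircG a) = p := orderOf_eq_prime h1 h2
    have hdvd : p ∣ m := hord ▸ orderOf_dvd_of_pow_eq_one
      (show B.toCircG a ^ m = 1 by rw [B.circG_pow]; exact hcontra)
    exact absurd (Nat.le_of_dvd hm0 hdvd) (not_le.mpr hmp)
  · intro hc
    letI : CommGroup (BraceStruct.CircG B) :=
      { (inferInstance : Group (BraceStruct.CircG B)) with mul_comm := hc }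
    haveI : NeZero p := ⟨hp.ne_zero⟩
    letI modM : Module (ZMod p) M := AddCommGroup.zmodModule hchar
    have htor : ∀ x : Additive (BraceStruct.CircG B), p • x = 0 := by
      intro x
      have h7 : (p • x).toMul = (1 : BraceStruct.CircG B) := by
        rw [toMul_nsmul, B.circG_pow x.toMul]
        exact key _
      exact Additive.toMul.injective h7
    letI modA : Module (ZMod p) (Additive (BraceStruct.CircG B)) :=
      AddCommGroup.zmodModule htor
    letI : Fintype (Additive (BraceStruct.CircG B)) := ‹Fintype M›
    have hcard : Fintype.card (Additive (BraceStruct.CircG B)) = Fintype.card M := rfl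
    have hfr : Module.finrank (ZMod p) (Additive (BraceStruct.CircG B)) =
        Module.finrank (ZMod p) M := by
      have h1 := Module.card_eq_pow_finrank (K := ZMod p) (V := Additive (BraceStruct.CircG B))
      have h2 := Module.card_eq_pow_finrank (K := ZMod p) (V := M)
      rw [ZMod.card] at h1 h2
      refine Nat.pow_right_injective hp.two_le ?_
      show p ^ Module.finrank (ZMod p) (Additive (BraceStruct.CircG B)) =
        p ^ Module.finrank (ZMod p) M
      rw [← h1, ← h2, hcard]
    letI finM := @Module.Finite.of_finite (ZMod p) M _ _ modM _
    letI finA := @Module.Finite.of_finite (ZMod p) (Additive (BraceStruct.CircG B)) _ _ modA _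
    letI freeM := @Module.Free.of_divisionRing (ZMod p) M _ _ modM
    letI freeA := @Module.Free.of_divisionRing (ZMod p) (Additive (BraceStruct.CircG B)) _ _ modA
    have hne : Nonempty ((Additive (BraceStruct.CircG B)) ≃ₗ[ZMod p] M) :=
      @FiniteDimensional.nonempty_linearEquiv_of_finrank_eq (ZMod p)
        (Additive (BraceStruct.CircG B)) M _ _ modA freeA _ modM freeM _ finA finM hfr
    obtain ⟨f⟩ := hne
    exact ⟨f.toEquiv, fun x y => f.map_add x y⟩
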